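/- In every image-finite labelled transition system, bisimilarity coincides with the intersection of all finite approximants: ∼ = ∩_{k∈ℕ} ∼_k; that is, two states s, t satisfy s ∼ t if and only if s ∼_k t for every k ∈ ℕ. -/

import Mathlib

namespace LTS

variable {Act S : Type*}

/-- `R` is a (strong) bisimulation for the transition relation `tr` -/
def IsBisim (tr : Act → S → S → Prop) (R : S → S → Prop) : Prop :=
  ∀ s t, R s t →
    (∀ a s', tr a s s' → ∃ t', tr a t t' ∧ R s' t') ∧
    (∀ a t', tr a t t' → ∃ s', tr a s s' ∧ R s' t')

/-- bisimilarity: the largest bisimulation (the union of all bisimulations) -/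
def Bisim (tr : Act → S → S → Prop) (s t : S) : Prop := ∃ R, IsBisim tr R ∧ R s t

/-- the approximants `∼_k`: `∼_0` relates everything, and `s ∼_{k+1} t` iff each
transition of one side can be matched by the other side into `∼_k` -/
def approx (tr : Act → S → S → Prop) : ℕ → S → S → Prop
  | 0 => fun _ _ => True
  | k + 1 => fun s t => approx tr k s t ∧
      (∀ a s', tr a s s' → ∃ t', tr a t t' ∧ approx tr k s' t') ∧
      (∀ a t', tr a t t' → ∃ s', tr a s s' ∧ approx tr k s' t')

end LTS

open Filter

theorem Set.Finite.exists_forall_of_antitone {α : Type*} {s : Set α} (hs : s.Finite)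
    {Q : ℕ → α → Prop} (hQ : Antitone Q) (h : ∀ k, ∃ x ∈ s, Q k x) :
    ∃ x ∈ s, ∀ k, Q k x := by
  by_contra! hfail
  -- by antitonicity each `x ∈ s` fails from some level on; finitely many levels have a maximum
  have hevent : ∀ᶠ k in atTop, ∀ x ∈ s, ¬ Q k x :=
    (eventually_all_finite hs).2 fun x hx => by
      obtain ⟨k, hk⟩ := hfail x hx
      exact eventually_atTop.2 ⟨k, fun j hkj hj => hk (hQ hkj x hj)⟩
  obtain ⟨k, hk⟩ := hevent.exists
  obtain ⟨x, hx, hQx⟩ := h k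
  exact hk x hx hQx

namespace LTS

variable {Act S : Type*} {tr : Act → S → S → Prop}

theorem approx_antitone : Antitone (approx tr) :=
  antitone_nat_of_succ_le fun _ _ _ h => h.1

theorem IsBisim.approx {R : S → S → Prop} (hR : IsBisim tr R) {s t : S} (hst : R s t) (k : ℕ) :
    approx tr k s t := by
  induction k generalizing s t with
  | zero => trivial
  | succ k ih =>
    refine ⟨ih hst, fun a s' hs' => ?_, fun a t' ht' => ?_⟩
    · obtain ⟨t', ht', hR'⟩ := (hR s t hst).1 a s' hs'
      exact ⟨t', ht', ih hR'⟩
    · obtain ⟨s', hs', hR'⟩ := (hR s t hst).2 a t' ht'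
      exact ⟨s', hs', ih hR'⟩

/-- Image-finiteness lets the matching transitions chosen separately at each level be replaced by
a single one that matches at every level. -/
theorem isBisim_forall_approx (himg : ∀ s a, {s' | tr a s s'}.Finite) :
    IsBisim tr fun s t => ∀ k, approx tr k s t := by
  intro s t hst
  constructor
  · intro a s' hs'
    exact (himg t a).exists_forall_of_antitone (fun _ _ hjk t' => approx_antitone hjk s' t')
      fun k => (hst (k + 1)).2.1 a s' hs'
  · intro a t' ht'
    exact (himg s a).exists_forall_of_antitone (fun _ _ hjk s' => approx_antitone hjk s' t')
      fun k => (hst (k + 1)).2.2 a t' ht'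

end LTS

open LTS in
/-- In every image-finite labelled transition system, bisimilarity
coincides with the intersection of all finite approximants:
`s ∼ t` iff `s ∼_k t` for every `k ∈ ℕ`. -/
theorem bisim_iff_forall_approx {Act S : Type*} (tr : Act → S → S → Prop)
    (himg : ∀ s a, {s' | tr a s s'}.Finite) (s t : S) :
    Bisim tr s t ↔ ∀ k, approx tr k s t :=
  ⟨fun ⟨_, hR, hst⟩ => hR.approx hst, fun h => ⟨_, isBisim_forall_approx himg, h⟩⟩
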